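/- For any integer n ≥ 2, the sum over k = 1 to n-1 of 1/(2 - exp(πik/n) - exp(-πik/n)) equals (n² − 1)/6. -/

import Mathlib

/-!
If `z ^ m = 1` and `z ≠ 1`, then `(1 - z) * ∑_{j<m} j z^j = -m`, so
`1 / (2 - z - z⁻¹) = W(z) W(z⁻¹) / m²` with `W(z) = ∑_{j<m} j z^j`. Summing `W(z) W(z⁻¹)` over all
`m`-th roots of unity gives `m ∑_{j<m} j²` by orthogonality; removing the term
`W(1)² = (m(m-1)/2)²` of `z = 1` leaves `∑_{k=1}^{m-1} 1 / (2 - ζ^k - ζ^{-k}) = (m² - 1) / 12` for a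
primitive `m`-th root `ζ`. For `ζ = exp(πi/n)` and `m = 2n`, the terms `k` and `2n - k` agree and the
term `k = n` is `1/4`, which gives `(n² - 1) / 6` for the sum over `1 ≤ k ≤ n - 1`.
-/

open Complex Finset

section CommRing

variable {R : Type*} [CommRing R]

theorem sum_range_natCast_mul_two (m : ℕ) :
    (∑ j ∈ range m, (j : R)) * 2 = m * (m - 1) := by
  induction m with
  | zero => simp
  | succ m ih => rw [sum_range_succ, add_mul, ih]; push_cast; ring

theorem sum_range_natCast_sq_mul_six (m : ℕ) :
    (∑ j ∈ range m, (j : R) ^ 2) * 6 = m * (m - 1) * (2 * m - 1) := by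
  induction m with
  | zero => simp
  | succ m ih => rw [sum_range_succ, add_mul, ih]; push_cast; ring

noncomputable def weightedGeomSum (m : ℕ) (z : R) : R := ∑ j ∈ range m, (j : R) * z ^ j

theorem one_sub_mul_weightedGeomSum (m : ℕ) (z : R) :
    (1 - z) * weightedGeomSum m z = ∑ j ∈ range m, z ^ j - 1 - (m - 1) * z ^ m := by
  induction m with
  | zero => simp [weightedGeomSum]
  | succ m ih =>
    rw [weightedGeomSum, sum_range_succ, ← weightedGeomSum, mul_add, ih, sum_range_succ]
    push_cast
    ring

end CommRing

theorem sum_Ico_one_two_mul_of_reflect {M : Type*} [AddCommMonoid M] (g : ℕ → M) {n : ℕ}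
    (hn : 0 < n) (hg : ∀ k ≤ n, g (2 * n - k) = g k) :
    ∑ k ∈ Ico 1 (2 * n), g k = 2 • ∑ k ∈ Ico 1 n, g k + g n := by
  have hupper : ∑ k ∈ Ico (n + 1) (2 * n), g k = ∑ k ∈ Ico 1 n, g k := by
    calc ∑ k ∈ Ico (n + 1) (2 * n), g k = ∑ k ∈ Ico (n + 1) (2 * n), g (2 * n - k) := by
          refine sum_congr rfl fun k hk => ?_
          have hk := mem_Ico.1 hk
          rw [← hg (2 * n - k) (by omega), Nat.sub_sub_self (by omega)]
      _ = ∑ k ∈ Ico 1 n, g k := by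
          rw [sum_Ico_reflect g (n + 1) (by omega : 2 * n ≤ 2 * n + 1),
            show 2 * n + 1 - 2 * n = 1 by omega, show 2 * n + 1 - (n + 1) = n by omega]
  rw [← sum_Ico_consecutive g (by omega : 1 ≤ n) (by omega : n ≤ 2 * n),
    sum_eq_sum_Ico_succ_bot (by omega : n < 2 * n), hupper]
  abel

section Field

variable {K : Type*} [Field K]

theorem one_sub_mul_weightedGeomSum_of_pow_eq_one {m : ℕ} {z : K} (hzm : z ^ m = 1)
    (hz : z ≠ 1) : (1 - z) * weightedGeomSum m z = -m := by
  rw [one_sub_mul_weightedGeomSum, geom_sum_eq hz, hzm, sub_self, zero_div]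
  ring

theorem two_sub_sub_inv_mul_weightedGeomSum_mul {m : ℕ} {z : K} (hzm : z ^ m = 1)
    (hz : z ≠ 1) :
    (2 - z - z⁻¹) * (weightedGeomSum m z * weightedGeomSum m z⁻¹) = (m : K) ^ 2 := by
  rcases eq_or_ne z 0 with rfl | hz0
  · obtain rfl : m = 0 := by
      by_contra hm
      simp [zero_pow hm] at hzm
    simp [weightedGeomSum]
  have hfactor : 2 - z - z⁻¹ = (1 - z) * (1 - z⁻¹) := by field_simp; ring
  have hinv := one_sub_mul_weightedGeomSum_of_pow_eq_one (by rw [inv_pow, hzm, inv_one])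
    (inv_ne_one.2 hz)
  rw [hfactor, mul_mul_mul_comm, one_sub_mul_weightedGeomSum_of_pow_eq_one hzm hz, hinv]
  ring

end Field

namespace IsPrimitiveRoot

variable {K : Type*} [Field K] {ζ : K} {m : ℕ}

theorem sum_pow_pow_mul_inv_pow_pow (hζ : IsPrimitiveRoot ζ m) {j l : ℕ} (hj : j < m)
    (hl : l < m) :
    ∑ k ∈ range m, (ζ ^ k) ^ j * ((ζ ^ k)⁻¹) ^ l = if j = l then (m : K) else 0 := by
  have hζ0 : ζ ≠ 0 := hζ.ne_zero (by omega)
  have hterm : ∀ k, (ζ ^ k) ^ j * ((ζ ^ k)⁻¹) ^ l = (ζ ^ j / ζ ^ l) ^ k := fun k => by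
    rw [div_pow, ← pow_mul, ← pow_mul, inv_pow, ← pow_mul, ← pow_mul, mul_comm j, mul_comm l,
      div_eq_mul_inv]
  simp_rw [hterm]
  split_ifs with hjl
  · simp [hjl, pow_ne_zero _ hζ0]
  have hne : ζ ^ j / ζ ^ l ≠ 1 := fun h =>
    hjl (hζ.pow_inj hj hl (div_eq_one_iff_eq (pow_ne_zero _ hζ0) |>.1 h))
  rw [geom_sum_eq hne, div_pow, ← pow_mul, ← pow_mul, mul_comm j, mul_comm l, pow_mul, pow_mul,
    hζ.pow_eq_one, one_pow, one_pow, div_one, sub_self, zero_div]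

theorem sum_mul_sum_pow_inv_pow (hζ : IsPrimitiveRoot ζ m) (a b : ℕ → K) :
    ∑ k ∈ range m, (∑ j ∈ range m, a j * (ζ ^ k) ^ j) * (∑ l ∈ range m, b l * ((ζ ^ k)⁻¹) ^ l) =
      m * ∑ j ∈ range m, a j * b j := by
  calc _ = ∑ j ∈ range m, ∑ l ∈ range m,
        a j * b l * ∑ k ∈ range m, (ζ ^ k) ^ j * ((ζ ^ k)⁻¹) ^ l := by
        simp_rw [sum_mul_sum, mul_sum]
        rw [sum_comm]
        refine sum_congr rfl fun j _ => ?_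
        rw [sum_comm]
        refine sum_congr rfl fun l _ => sum_congr rfl fun k _ => ?_
        ring
    _ = ∑ j ∈ range m, a j * b j * m := by
        refine sum_congr rfl fun j hj => ?_
        rw [sum_congr rfl fun l hl => by
          rw [hζ.sum_pow_pow_mul_inv_pow_pow (mem_range.1 hj) (mem_range.1 hl), mul_ite, mul_zero]]
        rw [sum_ite_eq, if_pos hj]
    _ = _ := by rw [← sum_mul, mul_comm]

theorem sum_weightedGeomSum_pow_mul_inv (hζ : IsPrimitiveRoot ζ m) :
    ∑ k ∈ range m, weightedGeomSum m (ζ ^ k) * weightedGeomSum m (ζ ^ k)⁻¹ =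
      m * ∑ j ∈ range m, (j : K) ^ 2 := by
  simp_rw [weightedGeomSum, sq]
  exact hζ.sum_mul_sum_pow_inv_pow _ _

theorem sum_Ico_one_div_two_sub_pow_sub_inv [CharZero K] (hζ : IsPrimitiveRoot ζ m)
    (hm : 0 < m) :
    ∑ k ∈ Ico 1 m, 1 / (2 - ζ ^ k - (ζ ^ k)⁻¹) = ((m : K) ^ 2 - 1) / 12 := by
  have hm0 : (m : K) ^ 2 ≠ 0 := pow_ne_zero 2 (Nat.cast_ne_zero.2 hm.ne')
  have hterm : ∀ k ∈ Ico 1 m, 1 / (2 - ζ ^ k - (ζ ^ k)⁻¹) =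
      weightedGeomSum m (ζ ^ k) * weightedGeomSum m (ζ ^ k)⁻¹ / (m : K) ^ 2 := by
    intro k hk
    have hk := mem_Ico.1 hk
    have h := two_sub_sub_inv_mul_weightedGeomSum_mul
      (by rw [pow_right_comm, hζ.pow_eq_one, one_pow]) (hζ.pow_ne_one_of_pos_of_lt (by omega) hk.2)
    have hD : 2 - ζ ^ k - (ζ ^ k)⁻¹ ≠ 0 := left_ne_zero_of_mul (h ▸ hm0)
    rw [one_div, eq_div_iff hm0, ← h, inv_mul_cancel_left₀ hD]
  have hzero : weightedGeomSum m (ζ ^ 0) * weightedGeomSum m (ζ ^ 0)⁻¹ * 4 =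
      ((m : K) * (m - 1)) ^ 2 := by
    simp only [pow_zero, inv_one, weightedGeomSum, one_pow, mul_one]
    linear_combination
      (2 * ∑ j ∈ range m, (j : K) + m * (m - 1)) * sum_range_natCast_mul_two (R := K) m
  have hall := hζ.sum_weightedGeomSum_pow_mul_inv
  rw [sum_range_eq_add_Ico _ hm] at hall
  rw [sum_congr rfl hterm, ← sum_div, div_eq_div_iff hm0 (by norm_num)]
  linear_combination 12 * hall - 3 * hzero + 2 * m * sum_range_natCast_sq_mul_six (R := K) m

end IsPrimitiveRoot

theorem stmt1 (n : ℕ) (hn : 2 ≤ n) :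
    ∑ k ∈ Finset.Icc 1 (n - 1),
      1 / (2 - Complex.exp (Real.pi * Complex.I * k / n)
            - Complex.exp (-(Real.pi * Complex.I * k / n))) =
      ((n : ℂ) ^ 2 - 1) / 6 := by
  have hn0 : (n : ℂ) ≠ 0 := Nat.cast_ne_zero.2 (by omega)
  set ω := exp (Real.pi * I / n)
  have hω : IsPrimitiveRoot ω (2 * n) := by
    convert isPrimitiveRoot_exp (2 * n) (by omega) using 2
    push_cast
    field_simp
  have hpow (k : ℕ) : exp (Real.pi * I * k / n) = ω ^ k := by
    rw [← exp_nat_mul]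
    ring_nf
  have hmid : ω ^ n = -1 := by
    rw [← hpow, mul_div_assoc, div_self hn0, mul_one, exp_pi_mul_I]
  have hreflect (k : ℕ) (hk : k ≤ n) :
      1 / (2 - ω ^ (2 * n - k) - (ω ^ (2 * n - k))⁻¹) = 1 / (2 - ω ^ k - (ω ^ k)⁻¹) := by
    rw [pow_sub₀ _ (hω.ne_zero (by omega)) (by omega), hω.pow_eq_one, one_mul, inv_inv]
    ring
  have key := hω.sum_Ico_one_div_two_sub_pow_sub_inv (by omega)
  rw [sum_Ico_one_two_mul_of_reflect _ (by omega) hreflect, hmid] at key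
  rw [Icc_sub_one_right_eq_Ico_of_not_isMin (b := n) (by simp; omega)]
  simp_rw [exp_neg, hpow]
  push_cast at key
  linear_combination key / 2
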